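/- Let −3 < α < 0 and define J_α(v) = ∫_{ℝ³} |v−v_*|^α μ(v_*) dv_* where μ(v) = (2π)^{−3/2} e^{−|v|²/2}. Then there exists a constant C > 0 such that J_α(v) ≤ C ⟨v⟩^α for all v ∈ ℝ³. -/

import Mathlib

open MeasureTheory

/-- The standard Gaussian density `μ(v) = (2π)^{-3/2} e^{-|v|²/2}` on ℝ³. -/
noncomputable def gaussian (v : EuclideanSpace ℝ (Fin 3)) : ℝ :=
  (2 * Real.pi) ^ (-(3 : ℝ) / 2) * Real.exp (-‖v‖ ^ 2 / 2)

/-- The Japanese bracket `⟨v⟩ = (1+|v|²)^{1/2}`. -/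
noncomputable def jap {d : ℕ} (v : EuclideanSpace ℝ (Fin d)) : ℝ :=
  Real.sqrt (1 + ‖v‖ ^ 2)

open Metric Real
open scoped Nat

/-!
Split the integral according to whether `|v - w| < 1`. Near the singularity, Peetre's inequality
`⟨w⟩^α ≤ 2^(-α) ⟨v⟩^α ⟨v - w⟩^(-α)` together with the bound `μ(w) ≤ M ⟨w⟩^α` gives
`μ(w) ≤ 4^(-α) M ⟨v⟩^α`, leaving the singularity `|u|^α`, integrable on the unit ball since
`α > -3`. Away from it, `|v - w|^α ≤ 2^(-α) ⟨v - w⟩^α ≤ 4^(-α) ⟨v⟩^α ⟨w⟩^(-α)`, and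
`⟨w⟩^(-α) μ(w)` is integrable.
-/

section JapaneseBracket

variable {d : ℕ}

lemma one_le_jap (v : EuclideanSpace ℝ (Fin d)) : 1 ≤ jap v :=
  Real.one_le_sqrt.mpr (le_add_of_nonneg_right (by positivity))

lemma jap_pos (v : EuclideanSpace ℝ (Fin d)) : 0 < jap v :=
  one_pos.trans_le (one_le_jap v)

lemma jap_rpow_pos (v : EuclideanSpace ℝ (Fin d)) (s : ℝ) : 0 < jap v ^ s :=
  Real.rpow_pos_of_pos (jap_pos v) s

lemma jap_sq (v : EuclideanSpace ℝ (Fin d)) : jap v ^ 2 = 1 + ‖v‖ ^ 2 :=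
  Real.sq_sqrt (by positivity)

lemma jap_le_one_add_norm (v : EuclideanSpace ℝ (Fin d)) : jap v ≤ 1 + ‖v‖ :=
  sqrt_one_add_norm_sq_le v

lemma jap_le_two_mul_jap_mul_jap (v w : EuclideanSpace ℝ (Fin d)) :
    jap v ≤ 2 * jap w * jap (v - w) := by
  have htri : ‖v‖ ≤ ‖w‖ + ‖v - w‖ := by simpa using norm_add_le w (v - w)
  calc jap v ≤ 1 + ‖v‖ := jap_le_one_add_norm v
    _ ≤ (1 + ‖w‖) * (1 + ‖v - w‖) := by nlinarith [norm_nonneg w, norm_nonneg (v - w)]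
    _ ≤ (√2 * jap w) * (√2 * jap (v - w)) :=
      mul_le_mul (one_add_norm_le_sqrt_two_mul_sqrt w) (one_add_norm_le_sqrt_two_mul_sqrt (v - w))
        (by positivity) (mul_nonneg (Real.sqrt_nonneg 2) (jap_pos w).le)
    _ = 2 * jap w * jap (v - w) := by
      rw [mul_mul_mul_comm, Real.mul_self_sqrt zero_le_two, mul_assoc]

/-- Peetre's inequality. -/
lemma jap_rpow_le_of_nonpos {α : ℝ} (hα : α ≤ 0) (v w : EuclideanSpace ℝ (Fin d)) :
    jap w ^ α ≤ 2 ^ (-α) * jap v ^ α * jap (v - w) ^ (-α) := by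
  have hpow : jap v ^ (-α) ≤ 2 ^ (-α) * jap w ^ (-α) * jap (v - w) ^ (-α) := by
    rw [← Real.mul_rpow zero_le_two (jap_pos w).le,
      ← Real.mul_rpow (mul_nonneg zero_le_two (jap_pos w).le) (jap_pos (v - w)).le]
    exact Real.rpow_le_rpow (jap_pos v).le (jap_le_two_mul_jap_mul_jap v w) (neg_nonneg.mpr hα)
  have hv : jap v ^ α = (jap v ^ (-α))⁻¹ := by rw [Real.rpow_neg (jap_pos v).le, inv_inv]
  have hw : jap w ^ α = (jap w ^ (-α))⁻¹ := by rw [Real.rpow_neg (jap_pos w).le, inv_inv]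
  have hv0 := jap_rpow_pos v (-α)
  have hw0 := jap_rpow_pos w (-α)
  rw [hv, hw, inv_le_iff_one_le_mul₀ hw0]
  calc 1 = jap v ^ (-α) * (jap v ^ (-α))⁻¹ := (mul_inv_cancel₀ hv0.ne').symm
    _ ≤ 2 ^ (-α) * jap w ^ (-α) * jap (v - w) ^ (-α) * (jap v ^ (-α))⁻¹ :=
      mul_le_mul_of_nonneg_right hpow (inv_nonneg.mpr hv0.le)
    _ = 2 ^ (-α) * (jap v ^ (-α))⁻¹ * jap (v - w) ^ (-α) * jap w ^ (-α) := by ring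

lemma rpow_norm_le_of_one_le_norm {α : ℝ} (hα : α ≤ 0) {u : EuclideanSpace ℝ (Fin d)}
    (hu : 1 ≤ ‖u‖) : ‖u‖ ^ α ≤ 2 ^ (-α) * jap u ^ α := by
  have hjap : jap u / 2 ≤ ‖u‖ := by linarith [jap_le_one_add_norm u]
  calc ‖u‖ ^ α ≤ (jap u / 2) ^ α := Real.rpow_le_rpow_of_nonpos (by linarith [jap_pos u]) hjap hα
    _ = 2 ^ (-α) * jap u ^ α := by
      rw [Real.div_rpow (jap_pos u).le zero_le_two, Real.rpow_neg zero_le_two, div_eq_mul_inv,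
        mul_comm]

lemma integrable_jap_rpow_neg {r : ℝ} (hr : (d : ℝ) < r) :
    Integrable (fun w : EuclideanSpace ℝ (Fin d) => jap w ^ (-r)) := by
  convert integrable_rpow_neg_one_add_norm_sq (μ := volume) (E := EuclideanSpace ℝ (Fin d))
    (by simpa using hr) using 2 with w
  rw [jap, Real.sqrt_eq_rpow, ← Real.rpow_mul (by positivity)]
  ring_nf

end JapaneseBracket

lemma integrableOn_ball_rpow_norm {E : Type*} [NormedAddCommGroup E] [NormedSpace ℝ E]
    [FiniteDimensional ℝ E] [MeasurableSpace E] [BorelSpace E] {μ : Measure E}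
    [μ.IsAddHaarMeasure] {α : ℝ} (hα : -(Module.finrank ℝ E : ℝ) < α) (hα0 : α ≤ 0) (r : ℝ) :
    IntegrableOn (fun u : E => ‖u‖ ^ α) (ball 0 r) μ := by
  have hd : 1 ≤ Module.finrank ℝ E := by
    by_contra! h
    simp only [Nat.lt_one_iff.mp h, CharP.cast_eq_zero, neg_zero] at hα
    linarith
  refine integrableOn_ball_of_norm_le_rpow (C := 1) (α := -α) hd (by linarith)
    (ae_of_all _ fun u => ?_) (by fun_prop : Measurable fun u : E => ‖u‖ ^ α).aestronglyMeasurable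
  rw [neg_neg, one_mul, Real.norm_of_nonneg (by positivity)]

section Convolution

variable {d : ℕ} {α M : ℝ} {f : EuclideanSpace ℝ (Fin d) → ℝ}

lemma apply_le_of_norm_sub_lt_one (hα : α ≤ 0) (hf : ∀ w, 0 ≤ f w)
    (hM : ∀ w, jap w ^ (-α) * f w ≤ M) {v w : EuclideanSpace ℝ (Fin d)} (hvw : ‖v - w‖ < 1) :
    f w ≤ 4 ^ (-α) * jap v ^ α * M := by
  have hjap : jap (v - w) ^ (-α) ≤ 2 ^ (-α) :=
    Real.rpow_le_rpow (jap_pos _).le (by linarith [jap_le_one_add_norm (v - w)]) (by linarith)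
  have hM0 : 0 ≤ M := (mul_nonneg (jap_rpow_pos w _).le (hf w)).trans (hM w)
  calc f w = jap w ^ α * (jap w ^ (-α) * f w) := by
        rw [← mul_assoc, ← Real.rpow_add (jap_pos w), add_neg_cancel, Real.rpow_zero, one_mul]
    _ ≤ (2 ^ (-α) * jap v ^ α * jap (v - w) ^ (-α)) * M :=
        mul_le_mul (jap_rpow_le_of_nonpos hα v w) (hM w)
          (mul_nonneg (jap_rpow_pos w _).le (hf w))
          (mul_nonneg (mul_nonneg (by positivity) (jap_rpow_pos v α).le) (jap_rpow_pos _ _).le)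
    _ ≤ (2 ^ (-α) * jap v ^ α * 2 ^ (-α)) * M := by
        have := jap_rpow_pos v α
        gcongr
    _ = 4 ^ (-α) * jap v ^ α * M := by
        rw [show (4 : ℝ) = 2 * 2 by norm_num, Real.mul_rpow zero_le_two zero_le_two]; ring

lemma rpow_norm_sub_le_of_one_le_norm (hα : α ≤ 0) {v w : EuclideanSpace ℝ (Fin d)}
    (hvw : 1 ≤ ‖v - w‖) : ‖v - w‖ ^ α ≤ 4 ^ (-α) * jap v ^ α * jap w ^ (-α) := by
  calc ‖v - w‖ ^ α ≤ 2 ^ (-α) * jap (v - w) ^ α := rpow_norm_le_of_one_le_norm hα hvw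
    _ ≤ 2 ^ (-α) * (2 ^ (-α) * jap v ^ α * jap w ^ (-α)) := by
        gcongr
        simpa using jap_rpow_le_of_nonpos hα v (v - w)
    _ = 4 ^ (-α) * jap v ^ α * jap w ^ (-α) := by
        rw [show (4 : ℝ) = 2 * 2 by norm_num, Real.mul_rpow zero_le_two zero_le_two]; ring

lemma rpow_norm_sub_mul_le (hα : α ≤ 0) (hf : ∀ w, 0 ≤ f w) (hM : ∀ w, jap w ^ (-α) * f w ≤ M)
    (v w : EuclideanSpace ℝ (Fin d)) :
    ‖v - w‖ ^ α * f w ≤ 4 ^ (-α) * jap v ^ α *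
      (M * (ball 0 1).indicator (fun u => ‖u‖ ^ α) (v - w) + jap w ^ (-α) * f w) := by
  have hsing : 0 ≤ ‖v - w‖ ^ α := by positivity
  by_cases hvw : ‖v - w‖ < 1
  · rw [Set.indicator_of_mem (mem_ball_zero_iff.mpr hvw)]
    calc ‖v - w‖ ^ α * f w ≤ ‖v - w‖ ^ α * (4 ^ (-α) * jap v ^ α * M) :=
          mul_le_mul_of_nonneg_left (apply_le_of_norm_sub_lt_one hα hf hM hvw) hsing
      _ = 4 ^ (-α) * jap v ^ α * (M * ‖v - w‖ ^ α) := by ring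
      _ ≤ 4 ^ (-α) * jap v ^ α * (M * ‖v - w‖ ^ α + jap w ^ (-α) * f w) :=
          mul_le_mul_of_nonneg_left
            (le_add_of_nonneg_right (mul_nonneg (jap_rpow_pos w _).le (hf w)))
            (mul_nonneg (by positivity) (jap_rpow_pos v α).le)
  · rw [Set.indicator_of_notMem (by simpa using hvw), mul_zero, zero_add, ← mul_assoc]
    exact mul_le_mul_of_nonneg_right (rpow_norm_sub_le_of_one_le_norm hα (not_lt.mp hvw)) (hf w)

theorem integral_rpow_norm_sub_mul_le (hdα : -(d : ℝ) < α) (hα : α ≤ 0) (hf : ∀ w, 0 ≤ f w)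
    (hM : ∀ w, jap w ^ (-α) * f w ≤ M) (hint : Integrable fun w => jap w ^ (-α) * f w)
    (v : EuclideanSpace ℝ (Fin d)) :
    ∫ w, ‖v - w‖ ^ α * f w ≤
      4 ^ (-α) * (M * (∫ u in ball (0 : EuclideanSpace ℝ (Fin d)) 1, ‖u‖ ^ α) +
        ∫ w, jap w ^ (-α) * f w) * jap v ^ α := by
  have hsing : Integrable ((ball (0 : EuclideanSpace ℝ (Fin d)) 1).indicator (‖·‖ ^ α)) :=
    (integrableOn_ball_rpow_norm (by simpa using hdα) hα 1).integrable_indicator measurableSet_ball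
  calc ∫ w, ‖v - w‖ ^ α * f w
      ≤ ∫ w, 4 ^ (-α) * jap v ^ α *
          (M * (ball 0 1).indicator (‖·‖ ^ α) (v - w) + jap w ^ (-α) * f w) :=
        integral_mono_of_nonneg (ae_of_all _ fun w => by have := hf w; positivity)
          (((hsing.comp_sub_left v).const_mul M).add hint |>.const_mul _)
          (ae_of_all _ (rpow_norm_sub_mul_le hα hf hM v))
    _ = 4 ^ (-α) * (M * (∫ u in ball (0 : EuclideanSpace ℝ (Fin d)) 1, ‖u‖ ^ α) +
        ∫ w, jap w ^ (-α) * f w) * jap v ^ α := by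
        rw [integral_const_mul, integral_add ((hsing.comp_sub_left v).const_mul M) hint,
          integral_const_mul, integral_sub_left_eq_self (fun u => (ball 0 1).indicator (‖·‖ ^ α) u),
          integral_indicator measurableSet_ball]
        ring

end Convolution

lemma one_add_pow_mul_exp_neg_half_le {x : ℝ} (hx : 0 ≤ x) (n : ℕ) :
    (1 + x) ^ n * exp (-x / 2) ≤ 2 ^ n * n ! * exp (1 / 2) := by
  have key := Real.pow_div_factorial_le_exp (x := (1 + x) / 2) (by positivity) n
  rw [div_pow, div_div, div_le_iff₀ (by positivity)] at key
  calc (1 + x) ^ n * exp (-x / 2) ≤ exp ((1 + x) / 2) * (2 ^ n * n !) * exp (-x / 2) := by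
        gcongr
    _ = 2 ^ n * n ! * exp (1 / 2) := by
        rw [mul_comm (exp _), mul_assoc, ← Real.exp_add]
        ring_nf

lemma gaussian_nonneg (w : EuclideanSpace ℝ (Fin 3)) : 0 ≤ gaussian w := by
  unfold gaussian; positivity

lemma exists_jap_rpow_mul_gaussian_le (s : ℝ) :
    ∃ M, ∀ w : EuclideanSpace ℝ (Fin 3), jap w ^ s * gaussian w ≤ M := by
  set n := ⌈s / 2⌉₊
  refine ⟨(2 * π) ^ (-(3 : ℝ) / 2) * (2 ^ n * n ! * exp (1 / 2)), fun w => ?_⟩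
  have hs : jap w ^ s ≤ (1 + ‖w‖ ^ 2) ^ n := by
    calc jap w ^ s ≤ jap w ^ ((2 * n : ℕ) : ℝ) := by
          refine Real.rpow_le_rpow_of_exponent_le (one_le_jap w) ?_
          push_cast
          linarith [Nat.le_ceil (s / 2)]
      _ = (1 + ‖w‖ ^ 2) ^ n := by rw [Real.rpow_natCast, pow_mul, jap_sq]
  calc jap w ^ s * gaussian w
      ≤ (2 * π) ^ (-(3 : ℝ) / 2) * ((1 + ‖w‖ ^ 2) ^ n * exp (-‖w‖ ^ 2 / 2)) := by
        rw [gaussian, mul_left_comm]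
        gcongr
    _ ≤ (2 * π) ^ (-(3 : ℝ) / 2) * (2 ^ n * n ! * exp (1 / 2)) :=
        mul_le_mul_of_nonneg_left (one_add_pow_mul_exp_neg_half_le (sq_nonneg ‖w‖) n)
          (by positivity)

lemma integrable_jap_rpow_mul_gaussian (s : ℝ) :
    Integrable fun w : EuclideanSpace ℝ (Fin 3) => jap w ^ s * gaussian w := by
  obtain ⟨M, hM⟩ := exists_jap_rpow_mul_gaussian_le (s + 4)
  refine ((integrable_jap_rpow_neg (r := 4) (by norm_num)).const_mul M).mono'
    (by unfold jap gaussian; fun_prop) (ae_of_all _ fun w => ?_)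
  rw [Real.norm_of_nonneg (mul_nonneg (jap_rpow_pos w s).le (gaussian_nonneg w)), mul_comm M]
  calc jap w ^ s * gaussian w = jap w ^ (-4 : ℝ) * (jap w ^ (s + 4) * gaussian w) := by
        rw [← mul_assoc, ← Real.rpow_add (jap_pos w)]
        ring_nf
    _ ≤ jap w ^ (-4 : ℝ) * M := mul_le_mul_of_nonneg_left (hM w) (jap_rpow_pos w _).le

/-- For `-3 < α < 0`, `J_α(v) = ∫ |v-w|^α μ(w) dw ≤ C ⟨v⟩^α`. -/
theorem Jalpha_negative_upper_bound (α : ℝ) (hα0 : -3 < α) (hα2 : α < 0) :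
    ∃ C : ℝ, 0 < C ∧ ∀ v : EuclideanSpace ℝ (Fin 3),
      (∫ w : EuclideanSpace ℝ (Fin 3), ‖v - w‖ ^ α * gaussian w) ≤ C * jap v ^ α := by
  obtain ⟨M, hM⟩ := exists_jap_rpow_mul_gaussian_le (-α)
  set K := 4 ^ (-α) * (M * (∫ u in ball (0 : EuclideanSpace ℝ (Fin 3)) 1, ‖u‖ ^ α) +
    ∫ w, jap w ^ (-α) * gaussian w)
  refine ⟨max K 1, lt_max_of_lt_right one_pos, fun v => ?_⟩
  calc ∫ w, ‖v - w‖ ^ α * gaussian w ≤ K * jap v ^ α :=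
        integral_rpow_norm_sub_mul_le (by norm_num [hα0]) hα2.le
          gaussian_nonneg hM (integrable_jap_rpow_mul_gaussian _) v
    _ ≤ max K 1 * jap v ^ α := mul_le_mul_of_nonneg_right (le_max_left K 1) (jap_rpow_pos v α).le
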